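/- arXiv:1701.00510 — 4 statements merged into one kernel-verified Lean document; each statement's English description precedes it below -/
import Mathlib

section
/- Let A be a finite abelian group and a_1, ..., a_n elements of A. Then there exists a group homomorphism γ : A → {±1} with γ(a_i) = -1 for all i = 1, ..., n if and only if there is no relation in A of the form a_{i_1} a_{i_2} ⋯ a_{i_k} = x² with k odd (indices possibly repeated, x ∈ A). -/
/-!
Put `H := {(x² a_{i₁} ⋯ a_{iₘ}, (-1)ᵐ)} ≤ A × ℤˣ`; an odd relation says precisely that
`(1, -1) ∈ H`. Applying `γ` to an odd relation gives `-1 = γ(x)² = 1`. Conversely, if `(1, -1) ∉ H`,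
it survives in the quotient `(A × ℤˣ) ⧸ H`, an `𝔽₂`-vector space since `H` contains all squares; a
linear form equal to `1` there yields `γ`, because `(aᵢ, 1) ≡ (1, -1)` modulo `H`.
-/

theorem QuotientGroup.pow_eq_one_of_forall_pow_mem {G : Type*} [Group G] {H : Subgroup G}
    [H.Normal] {k : ℕ} (hH : ∀ g : G, g ^ k ∈ H) (q : G ⧸ H) : q ^ k = 1 := by
  induction q using QuotientGroup.induction_on with
  | H g => rw [← QuotientGroup.mk_pow, QuotientGroup.eq_one_iff]; exact hH g

theorem exists_monoidHom_units_int_apply_eq_neg_one {G : Type*} [CommGroup G]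
    (hG : ∀ g : G, g ^ 2 = 1) {g : G} (hg : g ≠ 1) : ∃ χ : G →* ℤˣ, χ g = -1 := by
  let _ : Module (ZMod 2) (Additive G) := AddCommGroup.zmodModule fun x => hG x.toMul
  obtain ⟨φ, hφ⟩ := Module.Projective.exists_dual_eq_one (ZMod 2) (x := Additive.ofMul g) hg
  refine ⟨{ toFun h := (-1 : ℤˣ) ^ φ (Additive.ofMul h)
            map_one' := by simp
            map_mul' h h' := by simp [uzpow_add] }, ?_⟩
  simp [hφ]

section SignedProducts

variable {A : Type*} [CommGroup A] {n : ℕ} (a : Fin n → A)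

def signedProducts : Subgroup (A × ℤˣ) where
  carrier := {g | ∃ (m : ℕ) (i : Fin m → Fin n) (x : A), (x ^ 2 * ∏ j, a (i j), (-1) ^ m) = g}
  one_mem' := ⟨0, Fin.elim0, 1, by simp⟩
  mul_mem' := by
    rintro _ _ ⟨m, i, x, rfl⟩ ⟨m', i', x', rfl⟩
    refine ⟨m + m', Fin.append i i', x * x', ?_⟩
    simp only [Fin.prod_univ_add, Fin.append_left, Fin.append_right, Prod.mk_mul_mk, pow_add,
      mul_pow]
    congr 1
    exact mul_mul_mul_comm _ _ _ _
  inv_mem' := by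
    rintro _ ⟨m, i, x, rfl⟩
    refine ⟨m, i, (x * ∏ j, a (i j))⁻¹, ?_⟩
    simp only [Prod.inv_mk, Int.units_inv_eq_self, Prod.mk.injEq, and_true]
    rw [inv_pow, mul_pow, pow_two (∏ j, a (i j)), mul_inv, mul_inv, mul_inv, mul_assoc,
      inv_mul_cancel_right]

variable {a}

theorem sq_mem_signedProducts (g : A × ℤˣ) : g ^ 2 ∈ signedProducts a :=
  ⟨0, Fin.elim0, g.1, by simp [Prod.ext_iff, Int.units_sq]⟩

theorem apply_neg_one_mem_signedProducts (i : Fin n) : (a i, -1) ∈ signedProducts a :=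
  ⟨1, fun _ => i, 1, by simp⟩

theorem one_neg_one_mem_signedProducts_iff :
    ((1, -1) ∈ signedProducts a) ↔
      ∃ (m : ℕ) (i : Fin m → Fin n) (x : A), Odd m ∧ (∏ j, a (i j)) = x ^ 2 := by
  refine ⟨fun ⟨m, i, x, h⟩ => ?_, fun ⟨m, i, x, hm, h⟩ => ⟨m, i, x⁻¹, ?_⟩⟩
  · simp only [Prod.mk.injEq, neg_one_pow_eq_neg_one_iff_odd (by decide : (-1 : ℤˣ) ≠ 1)] at h
    exact ⟨m, i, x⁻¹, h.2, by rw [inv_pow, eq_inv_iff_mul_eq_one, mul_comm, h.1]⟩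
  · simp [h, hm.neg_one_pow]

end SignedProducts

theorem pm_one_hom_iff_no_odd_square_relation_general
    (A : Type*) [CommGroup A] (n : ℕ) (a : Fin n → A) :
    (∃ γ : A →* ℤˣ, ∀ i, γ (a i) = -1) ↔
      ¬ ∃ (m : ℕ) (i : Fin m → Fin n) (x : A),
          Odd m ∧ (∏ j, a (i j)) = x ^ 2 := by
  constructor
  · rintro ⟨γ, hγ⟩ ⟨m, i, x, hm, hrel⟩
    have := congrArg γ hrel
    simp [hγ, hm.neg_one_pow, Int.units_sq] at this
  · rw [← one_neg_one_mem_signedProducts_iff]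
    intro hnot
    obtain ⟨χ, hχ⟩ := exists_monoidHom_units_int_apply_eq_neg_one
      (QuotientGroup.pow_eq_one_of_forall_pow_mem sq_mem_signedProducts)
      (g := QuotientGroup.mk ((1, -1) : A × ℤˣ)) (by rwa [Ne, QuotientGroup.eq_one_iff])
    refine ⟨χ.comp ((QuotientGroup.mk' _).comp (MonoidHom.inl A ℤˣ)), fun i => ?_⟩
    have hsplit : ((a i, 1) : A × ℤˣ) = (a i, -1) * (1, -1) := by simp
    show χ (QuotientGroup.mk (a i, 1)) = -1
    rw [hsplit, QuotientGroup.mk_mul,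
      (QuotientGroup.eq_one_iff _).2 (apply_neg_one_mem_signedProducts i), one_mul, hχ]

/-- For a finite abelian group `A` and elements `a 1, ..., a n`, there exists a
group homomorphism `γ : A → {±1}` with `γ (a i) = -1` for all `i` if and only if there is no
relation `a (i₁) * ⋯ * a (i_m) = x ^ 2` with `m` odd (indices possibly repeated). -/
theorem pm_one_hom_iff_no_odd_square_relation
    (A : Type*) [CommGroup A] [Finite A] (n : ℕ) (a : Fin n → A) :
    (∃ γ : A →* ℤˣ, ∀ i, γ (a i) = -1) ↔
      ¬ ∃ (m : ℕ) (i : Fin m → Fin n) (x : A),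
          Odd m ∧ (∏ j, a (i j)) = x ^ 2 :=
  pm_one_hom_iff_no_odd_square_relation_general A n a
end

section
/- Let Γ be a finite abelian group with a bicharacter r₀ : Γ × Γ → k^× and elements g_1, ..., g_n ∈ Γ with r₀(g_i, g_i) = -1 and r₀(g_i, g_j)r₀(g_j, g_i) = 1 for i ≠ j. Then there is no relation of the form g_{i_1} g_{i_2} ⋯ g_{i_k} = x² with k odd and x in the subgroup generated by g_1, ..., g_n. -/
/-!
Let `B` be the bicharacter and `q y = B y y`. Expanding `q (y * z)` shows that `q` is
multiplicative wherever the symmetrized form `B y z * B z y` is trivial. The hypotheses make the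
symmetrized form trivial on pairs of generators, hence on the subgroup `H` they generate, so `q`
is a character of `H`. A product of an odd number of generators then has `q = (-1) ^ m = -1`,
whereas for `x ∈ H` we get `q (x ^ 2) = (B x x * B x x) ^ 2 = 1`; in characteristic zero
`-1 ≠ 1`.
-/

namespace MonoidHom

def ofBimul {G H M : Type*} [MulOneClass G] [MulOneClass H] [CommGroup M] (r : G → H → M)
    (h₁ : ∀ x y z, r (x * y) z = r x z * r y z) (h₂ : ∀ x y z, r x (y * z) = r x y * r x z) :
    G →* H →* M :=
  MonoidHom.mk' (fun x => MonoidHom.mk' (r x) (h₂ x)) fun x y => MonoidHom.ext (h₁ x y)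

theorem eq_one_of_mem_closure₂ {G H M : Type*} [Group G] [Group H] [CommMonoid M]
    (B : G →* H →* M) {s : Set G} {t : Set H} (hst : ∀ y ∈ s, ∀ z ∈ t, B y z = 1) :
    ∀ y ∈ Subgroup.closure s, ∀ z ∈ Subgroup.closure t, B y z = 1 := by
  have ht : ∀ y ∈ s, Set.EqOn (B y) (1 : H →* M) (Subgroup.closure t) := fun y hy =>
    MonoidHom.eqOn_closure fun z hz => hst y hy z hz
  intro y hy z hz
  exact MonoidHom.eqOn_closure (f := B.flip z) (g := 1) (fun y' hy' => ht y' hy' hz) hy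

theorem mul_apply_swap_eq_one_of_mem_closure {G M : Type*} [Group G] [CommMonoid M]
    (B : G →* G →* M) {s : Set G} (hs : ∀ y ∈ s, ∀ z ∈ s, B y z * B z y = 1) :
    ∀ y ∈ Subgroup.closure s, ∀ z ∈ Subgroup.closure s, B y z * B z y = 1 :=
  (B * B.flip).eq_one_of_mem_closure₂ hs

theorem apply_mul_mul {G M : Type*} [MulOneClass G] [CommMonoid M] (B : G →* G →* M) (y z : G) :
    B (y * z) (y * z) = B y y * B z z * (B y z * B z y) := by
  simp only [map_mul, mul_apply]
  ac_rfl

theorem apply_prod_prod_self {ι G M : Type*} [CommGroup G] [CommMonoid M] (B : G →* G →* M)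
    {H : Subgroup G} (hH : ∀ y ∈ H, ∀ z ∈ H, B y z * B z y = 1) (s : Finset ι) {f : ι → G}
    (hf : ∀ j, f j ∈ H) : B (∏ j ∈ s, f j) (∏ j ∈ s, f j) = ∏ j ∈ s, B (f j) (f j) := by
  induction s using Finset.cons_induction with
  | empty => simp
  | cons a s ha ih =>
    rw [Finset.prod_cons, Finset.prod_cons, apply_mul_mul, ih,
      hH _ (hf a) _ (H.prod_mem fun j _ => hf j), mul_one]

theorem apply_sq_sq_self {G M : Type*} [Monoid G] [CommMonoid M] (B : G →* G →* M) (x : G) :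
    B (x ^ 2) (x ^ 2) = (B x x * B x x) ^ 2 := by
  simp only [map_pow, pow_apply]
  rw [sq (B x x)]

end MonoidHom

theorem no_odd_square_relation_of_bicharacter_general
    (k : Type*) [Field k] [CharZero k]
    (Γ : Type*) [CommGroup Γ]
    (r₀ : Γ → Γ → kˣ)
    (hmul₁ : ∀ x y z : Γ, r₀ (x * y) z = r₀ x z * r₀ y z)
    (hmul₂ : ∀ x y z : Γ, r₀ x (y * z) = r₀ x y * r₀ x z)
    (n : ℕ) (g : Fin n → Γ)
    (hdiag : ∀ i, r₀ (g i) (g i) = -1)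
    (hoff : ∀ i j, i ≠ j → r₀ (g i) (g j) * r₀ (g j) (g i) = 1) :
    ¬ ∃ (m : ℕ) (i : Fin m → Fin n) (x : Γ),
        Odd m ∧ x ∈ Subgroup.closure (Set.range g) ∧ (∏ j, g (i j)) = x ^ 2 := by
  rintro ⟨m, i, x, hm, hx, hrel⟩
  let B := MonoidHom.ofBimul r₀ hmul₁ hmul₂
  have hgen : ∀ y ∈ Set.range g, ∀ z ∈ Set.range g, B y z * B z y = 1 := by
    rintro _ ⟨a, rfl⟩ _ ⟨b, rfl⟩
    obtain rfl | hab := eq_or_ne a b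
    · simp [B, MonoidHom.ofBimul, hdiag]
    · exact hoff a b hab
  have hH := B.mul_apply_swap_eq_one_of_mem_closure hgen
  have hodd : B (∏ j, g (i j)) (∏ j, g (i j)) = -1 := by
    rw [B.apply_prod_prod_self hH _ fun j => Subgroup.subset_closure ⟨i j, rfl⟩]
    exact (Finset.prod_congr rfl fun j _ => hdiag (i j)).trans (by simp [hm.neg_one_pow])
  have hsq : B (x ^ 2) (x ^ 2) = 1 := by
    rw [B.apply_sq_sq_self, hH x hx x hx, one_pow]
  have hneg : (-1 : kˣ) = 1 := hodd.symm.trans (hrel ▸ hsq)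
  exact absurd (congrArg Units.val hneg) (by norm_num)

/-- With a bicharacter `r₀` on a finite abelian group `Γ` and elements `g i`
satisfying `r₀ (g i) (g i) = -1` and `r₀ (g i) (g j) * r₀ (g j) (g i) = 1` for `i ≠ j`,
there is no relation `g i₁ * ⋯ * g i_m = x ^ 2` with `m` odd and `x` in the subgroup
generated by the `g i`. -/
theorem no_odd_square_relation_of_bicharacter
    (k : Type*) [Field k] [CharZero k]
    (Γ : Type*) [CommGroup Γ] [Finite Γ]
    (r₀ : Γ → Γ → kˣ)
    (hmul₁ : ∀ x y z : Γ, r₀ (x * y) z = r₀ x z * r₀ y z)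
    (hmul₂ : ∀ x y z : Γ, r₀ x (y * z) = r₀ x y * r₀ x z)
    (n : ℕ) (g : Fin n → Γ)
    (hdiag : ∀ i, r₀ (g i) (g i) = -1)
    (hoff : ∀ i j, i ≠ j → r₀ (g i) (g j) * r₀ (g j) (g i) = 1) :
    ¬ ∃ (m : ℕ) (i : Fin m → Fin n) (x : Γ),
        Odd m ∧ x ∈ Subgroup.closure (Set.range g) ∧ (∏ j, g (i j)) = x ^ 2 :=
  no_odd_square_relation_of_bicharacter_general k Γ r₀ hmul₁ hmul₂ n g hdiag hoff
end

section
/- Let q ∈ k be a scalar with q² = 1 and q ≠ 1 (i.e., q = -1), let V be a 1-dimensional space with basis x, and let B(V) # k[Γ] be the algebra generated by a finite abelian group Γ and x with relations gx = χ(g)xg and x² = 0, where χ ∈ Γ̂ and g₀ ∈ Γ satisfy χ(g₀) = -1. Then the elements {g, gx : g ∈ Γ} are linearly independent, and with Δ(g) = g ⊗ g, Δ(x) = g₀ ⊗ x + x ⊗ 1, this algebra is a Hopf algebra of dimension 2|Γ|. -/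
/-!
Realise the algebra on the vector space with basis `Γ × Bool`, the pair `(g, b)` standing for
`g xᵇ`; the multiplication table is forced by `x h = χ(h)⁻¹ h x` and `x² = 0`, and `Δ`, `ε` and
the antipode are defined on the basis. Every axiom is then an identity of (bi)linear maps, checked
on basis vectors. The relation `χ(g₀) = -1` is what makes `Δ` respect `x² = 0`: in `Δ(x)²` the
terms `g₀² ⊗ x²` and `x² ⊗ 1` vanish and `g₀x ⊗ x + xg₀ ⊗ x = (1 + χ(g₀)⁻¹) g₀x ⊗ x`.
-/

open TensorProduct

/-- The bosonization `B(V) # k[Γ]` of a 1-dimensional quantum linear space of symmetric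
type: a Hopf algebra containing the group `Γ` as group-likes and a `(g₀,1)`-skew-primitive
element `x` with `g x = χ(g) x g` and `x² = 0`, such that the elements `{g, g·x : g ∈ Γ}`
are linearly independent and the dimension is `2·|Γ|`. -/
structure PointedRankOneHopf (k : Type) [Field k]
    (Γ : Type) [CommGroup Γ] [Fintype Γ] (g₀ : Γ) (χ : Γ →* kˣ) where
  H : Type
  [ringH : Ring H]
  [hopfH : HopfAlgebra k H]
  G : Γ →* H
  x : H
  comul_G : ∀ g : Γ, Coalgebra.comul (R := k) (G g) = G g ⊗ₜ[k] G g
  counit_G : ∀ g : Γ, Coalgebra.counit (R := k) (G g) = 1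
  comul_x : Coalgebra.comul (R := k) x = G g₀ ⊗ₜ[k] x + x ⊗ₜ[k] (1 : H)
  comm_rel : ∀ g : Γ, G g * x = (χ g : k) • (x * G g)
  x_sq : x ^ 2 = 0
  lin_indep : LinearIndependent k (fun p : Γ × Bool => if p.2 then G p.1 * x else G p.1)
  dim_eq : Module.finrank k H = 2 * Fintype.card Γ

open Module

theorem LinearMap.assoc_of_basis {ι R M : Type*} [CommSemiring R] [AddCommMonoid M] [Module R M]
    (b : Basis ι R M) (μ : M →ₗ[R] M →ₗ[R] M)
    (h : ∀ i j l, μ (μ (b i) (b j)) (b l) = μ (b i) (μ (b j) (b l))) (x y z : M) :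
    μ (μ x y) z = μ x (μ y z) := by
  have : μ.compr₂ μ = ((LinearMap.llcomp R M M M) ∘ₗ μ).compl₂ μ :=
    LinearMap.ext_basis b b fun i j => b.ext (h i j)
  exact LinearMap.congr_fun (LinearMap.congr_fun₂ this x y) z

noncomputable section

def Bosonization (k : Type) [Field k] (Γ : Type) [CommGroup Γ] (_g₀ : Γ) (_χ : Γ →* kˣ) : Type :=
  Γ × Bool →₀ k

namespace Bosonization

variable {k : Type} [Field k] {Γ : Type} [CommGroup Γ] {g₀ : Γ} {χ : Γ →* kˣ}

local notation "A" => Bosonization k Γ g₀ χ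

instance : AddCommGroup A := inferInstanceAs (AddCommGroup (Γ × Bool →₀ k))

instance : Module k A := inferInstanceAs (Module k (Γ × Bool →₀ k))

variable (k Γ g₀ χ) in
def basis : Basis (Γ × Bool) k A := Finsupp.basisSingleOne

local notation "e" => basis k Γ g₀ χ

def mulBasis : Γ × Bool → Γ × Bool → A
  | (g, false), (h, c) => e (g * h, c)
  | (g, true), (h, false) => (χ h : k)⁻¹ • e (g * h, true)
  | (_, true), (_, true) => 0

def mulₗ : A →ₗ[k] A →ₗ[k] A :=
  (basis k Γ g₀ χ).constr k fun p => (basis k Γ g₀ χ).constr k (mulBasis p)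

lemma mulₗ_basis (p q : Γ × Bool) : mulₗ (e p) (e q) = (mulBasis p q : A) := by
  simp [mulₗ]

lemma mulBasis_assoc (p q r : Γ × Bool) :
    mulₗ (mulBasis p q) (e r) = mulₗ (e p) (mulBasis q r : A) := by
  obtain ⟨g, _ | _⟩ := p <;> obtain ⟨h, _ | _⟩ := q <;> obtain ⟨l, _ | _⟩ := r <;>
    simp [mulBasis, mulₗ_basis, smul_smul, mul_comm, mul_left_comm]

instance : Ring A :=
  { (inferInstance : AddCommGroup A) with
    mul := fun f g => mulₗ f g
    one := e (1, false)
    left_distrib := fun a b c => map_add _ b c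
    right_distrib := fun a b c => LinearMap.map_add₂ _ a b c
    zero_mul := fun a => LinearMap.map_zero₂ _ a
    mul_zero := fun a => map_zero _
    mul_assoc := LinearMap.assoc_of_basis (basis k Γ g₀ χ) mulₗ fun p q r => by
      simp only [mulₗ_basis, mulBasis_assoc]
    one_mul := fun a => LinearMap.congr_fun ((basis k Γ g₀ χ).ext
      (f₁ := mulₗ (e (1, false))) (f₂ := LinearMap.id) fun p => by
      obtain ⟨g, _ | _⟩ := p <;> simp [mulₗ_basis, mulBasis]) a
    mul_one := fun a => LinearMap.congr_fun ((basis k Γ g₀ χ).ext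
      (f₁ := mulₗ.flip (e (1, false))) (f₂ := LinearMap.id) fun p => by
      obtain ⟨g, _ | _⟩ := p <;> simp [mulₗ_basis, mulBasis]) a }

lemma basis_mul_basis (p q : Γ × Bool) : e p * e q = (mulBasis p q : A) :=
  mulₗ_basis p q

instance : Algebra k A :=
  Algebra.ofModule (fun r x y => LinearMap.map_smul₂ mulₗ r x y)
    (fun r x y => map_smul (mulₗ x) r y)

lemma one_def : (1 : A) = e (1, false) := rfl

def comulBasis : Γ × Bool → A ⊗[k] A
  | (g, false) => e (g, false) ⊗ₜ e (g, false)
  | (g, true) => e (g * g₀, false) ⊗ₜ e (g, true) + e (g, true) ⊗ₜ e (g, false)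

def counitBasis : Γ × Bool → k
  | (_, false) => 1
  | (_, true) => 0

instance : Coalgebra k A where
  comul := (basis k Γ g₀ χ).constr k comulBasis
  counit := (basis k Γ g₀ χ).constr k counitBasis
  coassoc := (basis k Γ g₀ χ).ext fun p => by
    obtain ⟨g, _ | _⟩ := p <;>
      simp [comulBasis, tmul_add, add_tmul]
    abel
  rTensor_counit_comp_comul := (basis k Γ g₀ χ).ext fun p => by
    obtain ⟨g, _ | _⟩ := p <;> simp [comulBasis, counitBasis]
  lTensor_counit_comp_comul := (basis k Γ g₀ χ).ext fun p => by
    obtain ⟨g, _ | _⟩ := p <;> simp [comulBasis, counitBasis]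

@[simp] lemma comul_basis (p : Γ × Bool) :
    Coalgebra.comul (R := k) (e p) = (comulBasis p : A ⊗[k] A) :=
  (basis k Γ g₀ χ).constr_basis k _ p

@[simp] lemma counit_basis (p : Γ × Bool) :
    Coalgebra.counit (R := k) (e p) = counitBasis p :=
  (basis k Γ g₀ χ).constr_basis k _ p

lemma comul_mulBasis (hχ : (χ g₀ : k) = -1) (p q : Γ × Bool) :
    Coalgebra.comul (R := k) (mulBasis p q : A) = comulBasis p * comulBasis q := by
  obtain ⟨g, _ | _⟩ := p <;> obtain ⟨h, _ | _⟩ := q <;>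
    simp [comulBasis, mulBasis, basis_mul_basis, Algebra.TensorProduct.tmul_mul_tmul, add_mul,
      mul_add, smul_tmul', tmul_smul, hχ, neg_tmul, mul_comm, mul_left_comm]

instance [Fact ((χ g₀ : k) = -1)] : Bialgebra k A where
  counit_one := by simp [one_def, counitBasis]
  mul_compr₂_counit := LinearMap.ext_basis (basis k Γ g₀ χ) (basis k Γ g₀ χ) fun p q => by
    obtain ⟨g, _ | _⟩ := p <;> obtain ⟨h, _ | _⟩ := q <;>
      simp [basis_mul_basis, mulBasis, counitBasis]
  comul_one := by simp [one_def, comulBasis, Algebra.TensorProduct.one_def]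
  mul_compr₂_comul := LinearMap.ext_basis (basis k Γ g₀ χ) (basis k Γ g₀ χ) fun p q => by
    simp [basis_mul_basis, comul_mulBasis Fact.out]

-- `S(gx) = S(x) S(g) = -g₀⁻¹ x g⁻¹`
def antipodeBasis : Γ × Bool → A
  | (g, false) => e (g⁻¹, false)
  | (g, true) => -((χ g : k) • e ((g * g₀)⁻¹, true))

instance [Fact ((χ g₀ : k) = -1)] : HopfAlgebra k A where
  antipode := (basis k Γ g₀ χ).constr k antipodeBasis
  mul_antipode_rTensor_comul := (basis k Γ g₀ χ).ext fun p => by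
    obtain ⟨g, _ | _⟩ := p <;>
      simp [comulBasis, counitBasis, antipodeBasis, basis_mul_basis, mulBasis, one_def]
  mul_antipode_lTensor_comul := (basis k Γ g₀ χ).ext fun p => by
    obtain ⟨g, _ | _⟩ := p <;>
      simp [comulBasis, counitBasis, antipodeBasis, basis_mul_basis, mulBasis, one_def]

def of : Γ →* A where
  toFun g := e (g, false)
  map_one' := rfl
  map_mul' g h := by simp [basis_mul_basis, mulBasis]

def x : A := e (1, true)

lemma of_mul_x (g : Γ) : (of g * x : A) = e (g, true) := by
  simp [of, x, basis_mul_basis, mulBasis]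

lemma x_mul_of (g : Γ) : (x * of g : A) = (χ g : k)⁻¹ • e (g, true) := by
  simp [of, x, basis_mul_basis, mulBasis]

lemma coe_basis :
    ⇑(basis k Γ g₀ χ) = fun p => if p.2 then of p.1 * x else of p.1 := by
  funext ⟨g, b⟩
  cases b
  · rfl
  · exact (of_mul_x g).symm

def toPointedRankOneHopf [Fintype Γ] [Fact ((χ g₀ : k) = -1)] : PointedRankOneHopf k Γ g₀ χ where
  H := A
  G := of
  x := x
  comul_G g := by simp [of, comulBasis]
  counit_G g := by simp [of, counitBasis]
  comul_x := by simp [of, x, comulBasis, one_def]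
  comm_rel g := by simp [of_mul_x, x_mul_of, smul_smul]
  x_sq := by simp [sq, x, basis_mul_basis, mulBasis]
  lin_indep := by
    rw [← coe_basis]
    exact (basis k Γ g₀ χ).linearIndependent
  dim_eq := by simp [finrank_eq_card_basis (basis k Γ g₀ χ), mul_comm]

end Bosonization

end

theorem Units.val_eq_neg_one_of_sq_eq_one {R : Type*} [Ring R] [NoZeroDivisors R] {q : Rˣ}
    (hq2 : q ^ 2 = 1) (hq1 : q ≠ 1) : (q : R) = -1 :=
  (sq_eq_one_iff.mp (by rw [← Units.val_pow_eq_pow_val, hq2, Units.val_one])).resolve_left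
    (Units.val_eq_one.not.mpr hq1)

theorem exists_pointed_rank_one_hopf_general
    (k : Type) [Field k]
    (Γ : Type) [CommGroup Γ] [Fintype Γ]
    (g₀ : Γ) (χ : Γ →* kˣ) (q : kˣ)
    (hq : q = χ g₀) (hq2 : q ^ 2 = 1) (hq1 : q ≠ 1) :
    Nonempty (PointedRankOneHopf k Γ g₀ χ) := by
  subst hq
  have : Fact ((χ g₀ : k) = -1) := ⟨Units.val_eq_neg_one_of_sq_eq_one hq2 hq1⟩
  exact ⟨Bosonization.toPointedRankOneHopf⟩

/-- Given a finite abelian group `Γ`, a character `χ ∈ Γ̂` and `g₀ ∈ Γ` with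
`χ(g₀) = -1` (i.e. `q = χ(g₀)` satisfies `q² = 1`, `q ≠ 1`), the algebra generated by `Γ`
and `x` with relations `g x = χ(g) x g`, `x² = 0` and comultiplication `Δ(g) = g ⊗ g`,
`Δ(x) = g₀ ⊗ x + x ⊗ 1` is a Hopf algebra of dimension `2|Γ|` in which the elements
`{g, g·x : g ∈ Γ}` are linearly independent. -/
theorem exists_pointed_rank_one_hopf
    (k : Type) [Field k] [IsAlgClosed k] [CharZero k]
    (Γ : Type) [CommGroup Γ] [Fintype Γ]
    (g₀ : Γ) (χ : Γ →* kˣ) (q : kˣ)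
    (hq : q = χ g₀) (hq2 : q ^ 2 = 1) (hq1 : q ≠ 1) :
    Nonempty (PointedRankOneHopf k Γ g₀ χ) :=
  exists_pointed_rank_one_hopf_general k Γ g₀ χ q hq hq2 hq1
end

section
/- In the Nichols/quantum-linear-space Hopf algebra H = B(V) # k[Γ] with skew-primitives x_1, ..., x_n satisfying x_i² = 0 and x_i x_j = χ_j(g_i) x_j x_i, for a subset P = {i_1 < ⋯ < i_s} ⊆ {1,...,n} write x_P = x_{i_1}⋯x_{i_s}. Then the comultiplication satisfies Δ(x_P) = Σ_{F ⊆ P} ψ(P,F) g_F x_{P∖F} ⊗ x_F, where g_F = Π_{i∈F} g_i and ψ(P,F) = Π_{j∈F, i∈P∖F, i<j} χ_j(g_i). -/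
open TensorProduct

/-!
Induct on `P`, splitting off its least element `a`: `x_P = x_a x_{P∖a}`, and `Δ` is multiplicative.
Multiplying the expansion of `Δ(x_{P∖a})` by `Δ(x_a) = g_a ⊗ x_a + x_a ⊗ 1`, the first summand
produces the terms with `a ∈ F` and leaves `ψ` unchanged, since `a` precedes every index.
In the second summand `x_a` has to be moved past `g_F`, which costs `χ_a(g_F)⁻¹ = ∏_{j ∈ F} χ_j(g_a)`
because the characters are dual to each other off the diagonal; this is exactly the factor that
`ψ` gains when `a` joins `P ∖ F`.
-/

namespace QuantumLinearSpace

variable {ι k Γ H : Type*}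

section Combinatorics

variable [LinearOrder ι] {M : Type*}

theorem prod_map_sort_insert_of_lt [Monoid M] (x : ι → M) {a : ι} {s : Finset ι}
    (ha : ∀ b ∈ s, a < b) :
    (((insert a s).sort (· ≤ ·)).map x).prod = x a * ((s.sort (· ≤ ·)).map x).prod := by
  rw [Finset.sort_insert _ (fun b hb => (ha b hb).le) fun h => (ha a h).false,
    List.map_cons, List.prod_cons]

theorem prod_prod_filter_lt_insert [CommMonoid M] (c : ι → ι → M) {a : ι} {D F : Finset ι}
    (haD : a ∉ D) (haF : ∀ j ∈ F, a < j) :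
    ∏ j ∈ F, ∏ i ∈ (insert a D).filter (· < j), c j i =
      (∏ j ∈ F, c j a) * ∏ j ∈ F, ∏ i ∈ D.filter (· < j), c j i := by
  rw [← Finset.prod_mul_distrib]
  refine Finset.prod_congr rfl fun j hj => ?_
  rw [Finset.filter_insert, if_pos (haF j hj),
    Finset.prod_insert fun h => haD (Finset.mem_filter.1 h).1]

theorem prod_insert_prod_filter_lt [CommMonoid M] (c : ι → ι → M) {a : ι} {D F : Finset ι}
    (haF : a ∉ F) (haD : ∀ i ∈ D, a ≤ i) :
    ∏ j ∈ insert a F, ∏ i ∈ D.filter (· < j), c j i =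
      ∏ j ∈ F, ∏ i ∈ D.filter (· < j), c j i := by
  rw [Finset.prod_insert haF, Finset.filter_false_of_mem fun i hi => not_lt.2 (haD i hi),
    Finset.prod_empty, one_mul]

end Combinatorics

section Characters

variable {M : Type*} [CommMonoid Γ] [CommGroup M] (g : ι → Γ) (χ : ι → Γ →* M)

theorem inv_apply_prod_of_dual (hoff : ∀ i j, i ≠ j → χ i (g j) * χ j (g i) = 1)
    {a : ι} {F : Finset ι} (haF : a ∉ F) :
    (χ a (∏ j ∈ F, g j))⁻¹ = ∏ j ∈ F, χ j (g a) := by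
  rw [map_prod, ← Finset.prod_inv_distrib]
  refine Finset.prod_congr rfl fun j hj => inv_eq_of_mul_eq_one_right ?_
  exact hoff a j fun h => haF (h ▸ hj)

end Characters

variable [CommSemiring k] [CommMonoid Γ] [Semiring H]

theorem mul_apply_eq_inv_smul [Module k H] (G : Γ →* H) (χ : ι → Γ →* kˣ) (x : ι → H)
    (comm_rel : ∀ (γ : Γ) (i), G γ * x i = (χ i γ : k) • (x i * G γ)) (a : ι) (γ : Γ) :
    x a * G γ = (((χ a γ)⁻¹ : kˣ) : k) • (G γ * x a) := by
  rw [comm_rel, smul_smul, ← Units.val_mul, inv_mul_cancel, Units.val_one, one_smul]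

variable [Bialgebra k H] [LinearOrder ι] (G : Γ →* H) (g : ι → Γ) (χ : ι → Γ →* kˣ) (x : ι → H)

/-- The scalar `ψ(P,F)`. -/
def skewCoeff (P F : Finset ι) : k :=
  ∏ j ∈ F, ∏ i ∈ (P \ F).filter (· < j), (χ j (g i) : k)

def comulTerm (P F : Finset ι) : H ⊗[k] H :=
  skewCoeff g χ P F • ((G (∏ i ∈ F, g i) * (((P \ F).sort (· ≤ ·)).map x).prod)
    ⊗ₜ[k] ((F.sort (· ≤ ·)).map x).prod)

theorem skewCoeff_insert_left {a : ι} {s F : Finset ι} (ha : ∀ b ∈ s, a < b) (hF : F ⊆ s) :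
    skewCoeff g χ (insert a s) F = (∏ j ∈ F, (χ j (g a) : k)) * skewCoeff g χ s F := by
  have haF : a ∉ F := fun h => (ha a (hF h)).false
  rw [skewCoeff, Finset.insert_sdiff_of_notMem _ haF,
    prod_prod_filter_lt_insert _ (fun h => (ha a (Finset.mem_sdiff.1 h).1).false)
      fun j hj => ha j (hF hj)]
  rfl

theorem skewCoeff_insert_insert {a : ι} {s F : Finset ι} (ha : ∀ b ∈ s, a < b) (hF : F ⊆ s) :
    skewCoeff g χ (insert a s) (insert a F) = skewCoeff g χ s F := by
  rw [skewCoeff, Finset.insert_sdiff_insert,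
    Finset.sdiff_insert_of_notMem fun h => (ha a h).false,
    prod_insert_prod_filter_lt _ (fun h => (ha a (hF h)).false)
      fun i hi => (ha i (Finset.mem_sdiff.1 hi).1).le]
  rfl

theorem tmul_one_mul_comulTerm (comm_rel : ∀ (γ : Γ) (i), G γ * x i = (χ i γ : k) • (x i * G γ))
    (hoff : ∀ i j, i ≠ j → χ i (g j) * χ j (g i) = 1)
    {a : ι} {s F : Finset ι} (ha : ∀ b ∈ s, a < b) (hF : F ⊆ s) :
    (x a ⊗ₜ[k] (1 : H)) * comulTerm G g χ x s F = comulTerm G g χ x (insert a s) F := by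
  have haF : a ∉ F := fun h => (ha a (hF h)).false
  have hx : x a * G (∏ j ∈ F, g j) = (∏ j ∈ F, (χ j (g a) : k)) • (G (∏ j ∈ F, g j) * x a) := by
    rw [mul_apply_eq_inv_smul G χ x comm_rel, inv_apply_prod_of_dual g χ hoff haF, Units.coe_prod]
  rw [comulTerm, comulTerm, skewCoeff_insert_left g χ ha hF, Finset.insert_sdiff_of_notMem _ haF,
    prod_map_sort_insert_of_lt x fun b hb => ha b (Finset.mem_sdiff.1 hb).1, mul_smul_comm,
    Algebra.TensorProduct.tmul_mul_tmul, one_mul, ← mul_assoc, hx, smul_mul_assoc,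
    ← TensorProduct.smul_tmul', smul_smul, mul_comm, mul_assoc]

theorem tmul_mul_comulTerm {a : ι} {s F : Finset ι} (ha : ∀ b ∈ s, a < b) (hF : F ⊆ s) :
    (G (g a) ⊗ₜ[k] x a) * comulTerm G g χ x s F =
      comulTerm G g χ x (insert a s) (insert a F) := by
  have haF : a ∉ F := fun h => (ha a (hF h)).false
  rw [comulTerm, comulTerm, skewCoeff_insert_insert g χ ha hF, Finset.insert_sdiff_insert,
    Finset.sdiff_insert_of_notMem fun h => (ha a h).false, Finset.prod_insert haF, map_mul,
    prod_map_sort_insert_of_lt x fun b hb => ha b (hF hb), mul_smul_comm,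
    Algebra.TensorProduct.tmul_mul_tmul, mul_assoc]

theorem comul_prod_sort (comm_rel : ∀ (γ : Γ) (i), G γ * x i = (χ i γ : k) • (x i * G γ))
    (hoff : ∀ i j, i ≠ j → χ i (g j) * χ j (g i) = 1)
    (comul_x : ∀ i, Coalgebra.comul (R := k) (x i) = G (g i) ⊗ₜ[k] x i + x i ⊗ₜ[k] (1 : H))
    (P : Finset ι) :
    Coalgebra.comul (R := k) ((P.sort (· ≤ ·)).map x).prod =
      ∑ F ∈ P.powerset, comulTerm G g χ x P F := by
  induction P using Finset.induction_on_min with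
  | empty => simp [comulTerm, skewCoeff, Algebra.TensorProduct.one_def]
  | insert a s ha ih =>
    rw [prod_map_sort_insert_of_lt x ha, Bialgebra.comul_mul, comul_x, ih,
      Finset.sum_powerset_insert fun h => (ha a h).false, add_mul, Finset.mul_sum,
      Finset.mul_sum, add_comm]
    congr 1 <;> refine Finset.sum_congr rfl fun F hF => ?_
    · exact tmul_one_mul_comulTerm G g χ x comm_rel hoff ha (Finset.mem_powerset.1 hF)
    · exact tmul_mul_comulTerm G g χ x ha (Finset.mem_powerset.1 hF)

end QuantumLinearSpace

theorem comul_ordered_monomial_general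
    (k : Type) [Field k]
    (Γ : Type) [CommGroup Γ]
    (H : Type) [Ring H] [HopfAlgebra k H]
    (n : ℕ) (g : Fin n → Γ) (χ : Fin n → (Γ →* kˣ))
    (hoff : ∀ i j, i ≠ j → χ i (g j) * χ j (g i) = 1)
    (G : Γ →* H) (x : Fin n → H)
    (comul_x : ∀ i, Coalgebra.comul (R := k) (x i) =
      G (g i) ⊗ₜ[k] x i + x i ⊗ₜ[k] (1 : H))
    (comm_rel : ∀ (γ : Γ) (i), G γ * x i = (χ i γ : k) • (x i * G γ)) :
    ∀ P : Finset (Fin n),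
      Coalgebra.comul (R := k) ((P.sort (· ≤ ·)).map x).prod =
        ∑ F ∈ P.powerset,
          (∏ j ∈ F, ∏ i ∈ (P \ F).filter (· < j), ((χ j) (g i) : k)) •
            ((G (∏ i ∈ F, g i) * (((P \ F).sort (· ≤ ·)).map x).prod)
              ⊗ₜ[k] ((F.sort (· ≤ ·)).map x).prod) :=
  QuantumLinearSpace.comul_prod_sort G g χ x comm_rel hoff comul_x

/-- In the quantum linear space Hopf algebra `B(V) # k[Γ]` with
skew-primitives `x i` satisfying `x i ^ 2 = 0` and `x i * x j = χ j (g i) • (x j * x i)`,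
the ordered products `x_P` (over subsets `P`, in increasing order) satisfy
`Δ(x_P) = ∑_{F ⊆ P} ψ(P,F) • (g_F x_{P∖F}) ⊗ x_F`, where `g_F = ∏_{i ∈ F} g i` and
`ψ(P,F) = ∏_{j ∈ F} ∏_{i ∈ P∖F, i < j} χ j (g i)`. -/
theorem comul_ordered_monomial
    (k : Type) [Field k] [IsAlgClosed k] [CharZero k]
    (Γ : Type) [CommGroup Γ] [Fintype Γ]
    (H : Type) [Ring H] [HopfAlgebra k H]
    (n : ℕ) (g : Fin n → Γ) (χ : Fin n → (Γ →* kˣ))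
    (hdiag : ∀ i, χ i (g i) = -1)
    (hoff : ∀ i j, i ≠ j → χ i (g j) * χ j (g i) = 1)
    (G : Γ →* H) (x : Fin n → H)
    (comul_G : ∀ γ : Γ, Coalgebra.comul (R := k) (G γ) = G γ ⊗ₜ[k] G γ)
    (comul_x : ∀ i, Coalgebra.comul (R := k) (x i) =
      G (g i) ⊗ₜ[k] x i + x i ⊗ₜ[k] (1 : H))
    (comm_rel : ∀ (γ : Γ) (i), G γ * x i = (χ i γ : k) • (x i * G γ))
    (x_sq : ∀ i, x i ^ 2 = 0)
    (braid_rel : ∀ i j, x i * x j = ((χ j) (g i) : k) • (x j * x i)) :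
    ∀ P : Finset (Fin n),
      Coalgebra.comul (R := k) ((P.sort (· ≤ ·)).map x).prod =
        ∑ F ∈ P.powerset,
          (∏ j ∈ F, ∏ i ∈ (P \ F).filter (· < j), ((χ j) (g i) : k)) •
            ((G (∏ i ∈ F, g i) * (((P \ F).sort (· ≤ ·)).map x).prod)
              ⊗ₜ[k] ((F.sort (· ≤ ·)).map x).prod) :=
  comul_ordered_monomial_general k Γ H n g χ hoff G x comul_x comm_rel
end
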